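/- Let P_N = Σ_{n=0}^{N} ψ_n(H) Y^n X^n where ψ_n(t) = (t+1)⋯(t+⌈N/2⌉)·φ_n(t) are polynomials (φ_n the osp(1|2) extremal projector coefficients). If v is a vector in a W(2n|n)-module with X^{N+1}v = 0, then X·P_N(v) = 0. Moreover, if Xv = 0 then P_N(v) = (H+1)⋯(H+⌈N/2⌉)·v. -/
import Mathlib


/-- The coefficient `κ_n(t)` of the `osp(1|2)` extremal projector recursion. -/
noncomputable def ospKappa (n : ℕ) : RatFunc ℂ :=
  if Even n then RatFunc.C (-(n : ℂ)/2) else RatFunc.X + RatFunc.C (((n : ℂ) + 1)/2)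

/-- The extremal projector coefficients `φ_n(t)`: `φ_0 = 1`,
`φ_{n+1}(t) = (-1)^{n+1} φ_n(t)/κ_{n+1}(t)`. -/
noncomputable def ospPhi : ℕ → RatFunc ℂ
  | 0 => 1
  | n + 1 => ((-1 : RatFunc ℂ) ^ (n + 1)) * ospPhi n / ospKappa (n + 1)

open Polynomial in
/-- Polynomial version of `ospKappa`. -/
noncomputable def kpoly' (n : ℕ) : Polynomial ℂ :=
  if Even n then C (-(n : ℂ)/2) else X + C (((n : ℂ) + 1)/2)

/-- `qpoly' n (t) = kpoly' n (t - 1)`. -/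
noncomputable def qpoly' (n : ℕ) : Polynomial ℂ := (kpoly' n).comp (Polynomial.X - 1)

lemma qpoly'_of_even {n : ℕ} (hn : Even n) : qpoly' n = Polynomial.C (-(n:ℂ)/2) := by
  simp [qpoly', kpoly', hn]

lemma qpoly'_of_odd {n : ℕ} (hn : ¬ Even n) :
    qpoly' n = Polynomial.X + Polynomial.C (((n:ℂ)-1)/2) := by
  simp only [qpoly', kpoly', hn, if_false, Polynomial.add_comp, Polynomial.X_comp,
    Polynomial.C_comp]
  rw [show ((n:ℂ)+1)/2 = ((n:ℂ)-1)/2 + 1 by ring, map_add, map_one]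
  ring

lemma qpoly'_rec (n : ℕ) :
    qpoly' (n+1) = (-1:Polynomial ℂ)^n * (Polynomial.X + Polynomial.C (n:ℂ)) + qpoly' n := by
  by_cases hn : Even n
  · rw [qpoly'_of_even hn, qpoly'_of_odd (by simp [Nat.even_add_one, hn]), Even.neg_one_pow hn]
    push_cast
    rw [show ((n:ℂ)+1-1)/2 = (n:ℂ) + (-(n:ℂ)/2) by ring, map_add]
    ring
  · rw [qpoly'_of_odd hn, qpoly'_of_even (by simp [Nat.even_add_one, hn]),
      (Nat.not_even_iff_odd.mp hn).neg_one_pow]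
    push_cast
    rw [show (-((n:ℂ)+1))/2 = -(n:ℂ) + (((n:ℂ)-1)/2) by ring, map_add, map_neg]
    ring

lemma comm_X_aeval {A : Type*} [Ring A] [Algebra ℂ A] (X H : A)
    (hHX : H * X - X * H = X) (p : Polynomial ℂ) :
    X * Polynomial.aeval H p = Polynomial.aeval H (p.comp (Polynomial.X - 1)) * X := by
  have hXH : ∀ m : ℕ, X * H ^ m = (H - 1) ^ m * X := by
    intro m
    induction m with
    | zero => simp
    | succ m ih =>
      have h1 : X * H = (H - 1) * X := by
        rw [sub_mul, one_mul, sub_eq_iff_eq_add.mp hHX]; abel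
      calc X * H ^ (m+1) = (X * H) * H ^ m := by rw [pow_succ']; noncomm_ring
        _ = (H - 1) * (X * H ^ m) := by rw [h1]; noncomm_ring
        _ = (H - 1) ^ (m+1) * X := by rw [ih, pow_succ']; noncomm_ring
  induction p using Polynomial.induction_on' with
  | add p q hp hq => simp [mul_add, add_mul, hp, hq]
  | monomial n a =>
    rw [← Polynomial.C_mul_X_pow_eq_monomial]
    simp only [Polynomial.mul_comp, Polynomial.C_comp, Polynomial.pow_comp, Polynomial.X_comp,
      map_mul, map_pow, Polynomial.aeval_C, Polynomial.aeval_X, map_sub, map_one]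
    rw [← mul_assoc, ← Algebra.commutes, mul_assoc, hXH n, ← mul_assoc]

lemma Ypow_H {A : Type*} [Ring A] [Algebra ℂ A] (Y H : A)
    (hHY : H * Y - Y * H = -Y) (m : ℕ) :
    Y ^ m * H = (H + (m : ℂ) • (1:A)) * Y ^ m := by
  induction m with
  | zero => simp
  | succ m ih =>
    have h1 : Y * H = H * Y + Y := by rw [sub_eq_iff_eq_add.mp hHY]; abel
    calc Y^(m+1) * H = Y^m * (Y * H) := by rw [pow_succ]; noncomm_ring
      _ = Y^m * H * Y + Y^(m+1) := by rw [h1, pow_succ]; noncomm_ring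
      _ = (H + (m:ℂ) • 1) * Y^m * Y + Y^(m+1) := by rw [ih]
      _ = (H + ((m+1:ℕ):ℂ) • 1) * Y^(m+1) := by
          rw [pow_succ]; push_cast; rw [add_smul, one_smul]; noncomm_ring

lemma X_mul_Ypow {A : Type*} [Ring A] [Algebra ℂ A] (X Y H : A)
    (hXY : X * Y + Y * X = H) (hHY : H * Y - Y * H = -Y) (n : ℕ) :
    X * Y ^ (n+1) = (-1:A)^(n+1) * (Y^(n+1) * X) + Polynomial.aeval H (qpoly' (n+1)) * Y^n := by
  induction n with
  | zero =>
    have h1 : qpoly' 1 = Polynomial.X := by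
      rw [qpoly'_of_odd (by decide)]; norm_num
    rw [h1]
    simp only [Polynomial.aeval_X, zero_add, pow_one, pow_zero, mul_one]
    rw [eq_sub_of_add_eq hXY]
    noncomm_ring
  | succ n ih =>
    have hq : Polynomial.aeval H (qpoly' (n+2)) =
        (-1:A)^(n+1) * (H + ((n+1:ℕ):ℂ) • (1:A)) + Polynomial.aeval H (qpoly' (n+1)) := by
      rw [qpoly'_rec (n+1)]
      simp only [map_add, map_mul, map_pow, map_neg, map_one, Polynomial.aeval_X,
        Polynomial.aeval_C, Algebra.algebraMap_eq_smul_one]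
    calc X * Y^(n+2) = (X * Y^(n+1)) * Y := by rw [pow_succ]; noncomm_ring
      _ = (-1:A)^(n+1) * (Y^(n+1) * (X*Y)) + Polynomial.aeval H (qpoly' (n+1)) * Y^(n+1) := by
          rw [ih, pow_succ]; noncomm_ring
      _ = (-1:A)^(n+1) * (Y^(n+1) * (H - Y*X)) + Polynomial.aeval H (qpoly' (n+1)) * Y^(n+1) := by
          rw [eq_sub_of_add_eq hXY]
      _ = (-1:A)^(n+1) * ((H + ((n+1:ℕ):ℂ) • (1:A)) * Y^(n+1) - Y^(n+2)*X)
            + Polynomial.aeval H (qpoly' (n+1)) * Y^(n+1) := by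
          rw [mul_sub, Ypow_H Y H hHY (n+1), pow_succ]; noncomm_ring
      _ = (-1:A)^(n+2) * (Y^(n+2) * X) + Polynomial.aeval H (qpoly' (n+2)) * Y^(n+1) := by
          rw [hq, pow_succ (-1:A) (n+1)]; noncomm_ring

lemma telescope {A : Type*} [Ring A] [Algebra ℂ A] (X Y H : A)
    (hXY : X * Y + Y * X = H) (hHX : H * X - X * H = X) (hHY : H * Y - Y * H = -Y)
    (ψ : ℕ → Polynomial ℂ) (N : ℕ)
    (hrec : ∀ m < N, ψ (m+1) * kpoly' (m+1) = (-1:Polynomial ℂ)^(m+1) * ψ m) :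
    X * (∑ n ∈ Finset.range (N+1), Polynomial.aeval H (ψ n) * Y^n * X^n)
      = Polynomial.aeval H ((-1:Polynomial ℂ)^N * (ψ N).comp (Polynomial.X - 1))
          * (Y^N * X^(N+1)) := by
  have hc : ∀ (k:ℕ) (z:A), z * (-1:A)^k = (-1:A)^k * z := by
    intro k z
    rcases Nat.even_or_odd k with hk|hk
    · rw [hk.neg_one_pow]; simp
    · rw [hk.neg_one_pow]; simp
  induction N with
  | zero =>
    rw [Finset.sum_range_one]
    simp only [pow_zero, mul_one, one_mul, pow_one]
    rw [comm_X_aeval X H hHX, zero_add, pow_one]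
  | succ N ih =>
    rw [Finset.sum_range_succ, mul_add, ih (fun m hm => hrec m (hm.trans (Nat.lt_succ_self N)))]
    set a := Polynomial.aeval H ((ψ (N+1)).comp (Polynomial.X - 1)) with ha
    set b := Polynomial.aeval H ((ψ N).comp (Polynomial.X - 1)) with hb
    set q := Polynomial.aeval H (qpoly' (N+1)) with hq
    have h2 : X * (Polynomial.aeval H (ψ (N+1)) * Y^(N+1) * X^(N+1))
        = a * (((-1:A)^(N+1) * (Y^(N+1) * X) + q * Y^N) * X^(N+1)) := by
      calc X * (Polynomial.aeval H (ψ (N+1)) * Y^(N+1) * X^(N+1))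
          = (X * Polynomial.aeval H (ψ (N+1))) * (Y^(N+1) * X^(N+1)) := by noncomm_ring
        _ = a * ((X * Y^(N+1)) * X^(N+1)) := by
            rw [comm_X_aeval X H hHX]; rw [← ha]; noncomm_ring
        _ = _ := by rw [X_mul_Ypow X Y H hXY hHY N]
    have key : a * q = (-1:A)^(N+1) * b := by
      rw [ha, hq, hb, ← map_mul]
      have h3 : (ψ (N+1)).comp (Polynomial.X - 1) * qpoly' (N+1)
          = (-1:Polynomial ℂ)^(N+1) * (ψ N).comp (Polynomial.X - 1) := by
        rw [qpoly', ← Polynomial.mul_comp, hrec N (Nat.lt_succ_self N)]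
        simp [Polynomial.mul_comp, Polynomial.pow_comp, Polynomial.neg_comp,
          Polynomial.one_comp]
      rw [h3]
      simp [map_mul, map_pow]
    have hA : a * (((-1:A)^(N+1) * (Y^(N+1) * X) + q * Y^N) * X^(N+1))
        = (-1:A)^(N+1) * a * (Y^(N+1) * X^(N+2)) + (-1:A)^(N+1) * b * (Y^N * X^(N+1)) := by
      calc a * (((-1:A)^(N+1) * (Y^(N+1) * X) + q * Y^N) * X^(N+1))
          = (a * (-1:A)^(N+1)) * (Y^(N+1) * (X * X^(N+1))) + (a * q) * (Y^N * X^(N+1)) := by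
            noncomm_ring
        _ = _ := by rw [hc, key, ← pow_succ']
    rw [h2, hA]
    simp only [map_mul, map_pow, map_neg, map_one, ← ha, ← hb]
    rw [pow_succ (-1:A) N]
    noncomm_ring

open Polynomial in
/-- Let `X, Y, H` (the images of the `osp(1|2)` generators) satisfy
`XY + YX = H`, `[H,X] = X`, `[H,Y] = -Y` in a `ℂ`-algebra `A`, and let
`ψ_n(t) = (t+1)⋯(t+⌈N/2⌉)·φ_n(t)` be the resulting *polynomials* (the hypothesis `hψ`
states that the polynomial `ψ n` equals `(t+1)⋯(t+K)·φ_n(t)` in `RatFunc ℂ`, `K = ⌈N/2⌉`).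
Set `P_N = Σ_{n=0}^{N} ψ_n(H) Y^n X^n`.  If `v` is a vector of a `W(2n|n)`-module
(given by a representation `ρ : A →ₐ[ℂ] End ℂ M`) with `X^{N+1} v = 0`, then
`X · P_N(v) = 0`; moreover if `X v = 0` then `P_N(v) = (H+1)⋯(H+⌈N/2⌉) v`. -/
theorem truncated_extremal_projector
    {A : Type*} [Ring A] [Algebra ℂ A] (X Y H : A)
    (hXY : X * Y + Y * X = H)
    (hHX : H * X - X * H = X)
    (hHY : H * Y - Y * H = -Y)
    (N : ℕ) (ψ : ℕ → Polynomial ℂ)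
    (hψ : ∀ n ≤ N, algebraMap (Polynomial ℂ) (RatFunc ℂ) (ψ n)
      = (∏ m ∈ Finset.Icc 1 ((N + 1) / 2), (RatFunc.X + RatFunc.C (m : ℂ))) * ospPhi n)
    {M : Type*} [AddCommGroup M] [Module ℂ M]
    (ρ : A →ₐ[ℂ] Module.End ℂ M) (v : M)
    (hv : ρ (X ^ (N + 1)) v = 0) :
    ρ X (ρ (∑ n ∈ Finset.range (N + 1), Polynomial.aeval H (ψ n) * Y ^ n * X ^ n) v) = 0 ∧
    (ρ X v = 0 →
      ρ (∑ n ∈ Finset.range (N + 1), Polynomial.aeval H (ψ n) * Y ^ n * X ^ n) v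
        = ρ (Polynomial.aeval H (∏ m ∈ Finset.Icc 1 ((N + 1) / 2), (Polynomial.X + Polynomial.C (m : ℂ)))) v) := by
  have hkmap : ∀ k : ℕ, algebraMap (Polynomial ℂ) (RatFunc ℂ) (kpoly' k) = ospKappa k := by
    intro k
    by_cases hk : Even k <;>
      simp [kpoly', ospKappa, hk, map_add, RatFunc.algebraMap_C, RatFunc.algebraMap_X]
  have hkne : ∀ k : ℕ, ospKappa (k+1) ≠ 0 := by
    intro k
    rw [← hkmap, map_ne_zero_iff _ (RatFunc.algebraMap_injective ℂ)]
    by_cases hk : Even (k+1)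
    · simp only [kpoly', hk, if_true]
      have h0 : ((k+1:ℕ):ℂ) ≠ 0 := Nat.cast_ne_zero.mpr (Nat.succ_ne_zero k)
      exact Polynomial.C_ne_zero.mpr (div_ne_zero (neg_ne_zero.mpr h0) two_ne_zero)
    · simp only [kpoly', hk, if_false]
      exact Polynomial.X_add_C_ne_zero _
  have hφ : ∀ k : ℕ, ospPhi (k+1) * ospKappa (k+1) = (-1:RatFunc ℂ)^(k+1) * ospPhi k := by
    intro k
    rw [ospPhi]
    exact div_mul_cancel₀ _ (hkne k)
  have hrec : ∀ m < N, ψ (m+1) * kpoly' (m+1) = (-1:Polynomial ℂ)^(m+1) * ψ m := by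
    intro m hm
    apply RatFunc.algebraMap_injective ℂ
    rw [map_mul, hkmap, hψ (m+1) hm, map_mul, map_pow, map_neg, map_one,
      hψ m (le_of_lt hm), mul_assoc, hφ m]
    ring
  constructor
  · have ht := telescope X Y H hXY hHX hHY ψ N hrec
    have h1 : ρ X (ρ (∑ n ∈ Finset.range (N + 1),
        Polynomial.aeval H (ψ n) * Y ^ n * X ^ n) v)
        = ρ (X * ∑ n ∈ Finset.range (N + 1),
            Polynomial.aeval H (ψ n) * Y ^ n * X ^ n) v := by
      rw [map_mul, Module.End.mul_apply]
    rw [h1, ht, map_mul, Module.End.mul_apply,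
      map_mul ρ (Y^N) (X^(N+1)), Module.End.mul_apply, hv, map_zero, map_zero]
  · intro h0
    rw [Finset.sum_range_succ', map_add, LinearMap.add_apply]
    have hz : ρ (∑ i ∈ Finset.range N,
        (Polynomial.aeval H (ψ (i+1)) * Y^(i+1) * X^(i+1))) v = 0 := by
      rw [map_sum, LinearMap.sum_apply]
      apply Finset.sum_eq_zero
      intro i _
      have he : Polynomial.aeval H (ψ (i+1)) * Y^(i+1) * X^(i+1)
          = (Polynomial.aeval H (ψ (i+1)) * Y^(i+1) * X^i) * X := by
        rw [pow_succ]; noncomm_ring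
      rw [he, map_mul, Module.End.mul_apply, h0, map_zero]
    rw [hz, zero_add]
    have hψ0 : ψ 0 = ∏ m ∈ Finset.Icc 1 ((N+1)/2), (Polynomial.X + Polynomial.C (m:ℂ)) := by
      apply RatFunc.algebraMap_injective ℂ
      rw [hψ 0 (Nat.zero_le N), show ospPhi 0 = 1 from rfl, mul_one, map_prod]
      exact Finset.prod_congr rfl fun m _ => by
        rw [map_add, RatFunc.algebraMap_X, RatFunc.algebraMap_C]
    simp [hψ0]
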